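/- (Pythagorean inequality for clique factorizations.) Let 𝒳 = 𝒳⁽¹⁾ × ⋯ × 𝒳⁽ᵈ⁾ be a finite product state space, let (Cᵢ)_{i=1}^n be subsets of ⟦d⟧ with ∪_{i=1}^n Cᵢ = ⟦d⟧, let π ∈ 𝒫(𝒳) be strictly positive, and P ∈ ℒ(𝒳). Let Lᵢ ∈ ℒ(𝒳^{(Cᵢ)}) for i = 1,…,n and let M ∈ ℒ(𝒳) be defined by M(x,y) := (1/Z(x,(Lᵢ))) ∏_{i=1}^n Lᵢ(x^{(Cᵢ)},y^{(Cᵢ)}) with Z(x,(Lᵢ)) := Σ_{y∈𝒳} ∏_{i=1}^n Lᵢ(x^{(Cᵢ)},y^{(Cᵢ)}), and let 𝐏_π ∈ ℒ(𝒳) be defined analogously with Lᵢ replaced by the keep-Cᵢ-in matrices P_π^{(Cᵢ)}. Assume Z(x,(Lᵢ)) and Z(x,(P_π^{(Cᵢ)})) are strictly positive for all x, and that Z(x,(Lᵢ)) ≥ Z(x,(P_π^{(Cᵢ)})) for all x ∈ 𝒳. Then D_KL^π(P ‖ M) ≥ D_KL^π(P ‖ 𝐏_π) + Σ_{i=1}^n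 D_KL^{π^{(Cᵢ)}}(P_π^{(Cᵢ)} ‖ Lᵢ). -/

import Mathlib

open Filter Finset
open scoped Classical

/-- `p` is a probability mass on the finite set `Y`. -/
def IsProbMass {Y : Type*} [Fintype Y] (p : Y → ℝ) : Prop :=
  (∀ x, 0 ≤ p x) ∧ ∑ x, p x = 1

/-- `M` is a transition matrix (row-stochastic matrix) on the finite set `Y`. -/
def IsTransMat {Y : Type*} [Fintype Y] (M : Y → Y → ℝ) : Prop :=
  (∀ x y, 0 ≤ M x y) ∧ ∀ x, ∑ y, M x y = 1

/-- The tensor product `⊗ᵢ Lᵢ` of transition matrices on a finite product space. -/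
noncomputable def tensorMat {d : ℕ} {X : Fin d → Type*} (L : ∀ i, X i → X i → ℝ) :
    (∀ i, X i) → (∀ i, X i) → ℝ :=
  fun x y => ∏ i, L i (x i) (y i)

/-- The term `M(x,y)·ln(M(x,y)/L(x,y))` with the conventions `0·ln(0/·) := 0` and
`a·ln(a/0) := +∞` for `a > 0`. -/
noncomputable def klTerm (m l : ℝ) : EReal :=
  if m = 0 then 0 else if l = 0 then ⊤ else ((m * Real.log (m / l) : ℝ) : EReal)

/-- The KL divergence `D_KL^π(M ‖ L)` between transition matrices, with the convention
`0·∞ := 0` (EReal multiplication). -/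
noncomputable def klDiv {Y : Type*} [Fintype Y] (π : Y → ℝ) (M L : Y → Y → ℝ) : EReal :=
  ∑ x, (π x : EReal) * ∑ y, klTerm (M x y) (L x y)

/-- The marginal `π⁽ˢ⁾` of `π` on the coordinates in `S`. -/
noncomputable def margS {d : ℕ} {X : Fin d → Type*} [∀ i, Fintype (X i)]
    (π : (∀ i, X i) → ℝ) (S : Finset (Fin d)) : (∀ j : S, X j.1) → ℝ :=
  fun xs => ∑ x : ∀ i, X i, if ∀ j : S, x j.1 = xs j then π x else 0

/-- The keep-`S`-in transition matrix `P_π⁽ˢ⁾` of `P` with respect to `π`. -/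
noncomputable def keepS {d : ℕ} {X : Fin d → Type*} [∀ i, Fintype (X i)]
    (π : (∀ i, X i) → ℝ) (P : (∀ i, X i) → (∀ i, X i) → ℝ) (S : Finset (Fin d)) :
    (∀ j : S, X j.1) → (∀ j : S, X j.1) → ℝ :=
  fun xs ys =>
    (∑ x : ∀ i, X i, ∑ y : ∀ i, X i,
        if (∀ j : S, x j.1 = xs j) ∧ (∀ j : S, y j.1 = ys j) then π x * P x y else 0) /
      margS π S xs

/-- The restriction of `x` to the coordinates in `S`. -/
noncomputable def restr {d : ℕ} {X : Fin d → Type*} (S : Finset (Fin d)) (x : ∀ i, X i) :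
    ∀ j : S, X j.1 :=
  fun j => x j.1

/-- The tensor product over the blocks `S i` of transition matrices `L i` on `𝒳^{(S i)}`. -/
noncomputable def tensorBlocks {d n : ℕ} {X : Fin d → Type*} (S : Fin n → Finset (Fin d))
    (L : ∀ i : Fin n, (∀ j : S i, X j.1) → (∀ j : S i, X j.1) → ℝ) :
    (∀ i, X i) → (∀ i, X i) → ℝ :=
  fun x y => ∏ i, L i (restr (S i) x) (restr (S i) y)

/-- The normalization constant `Z(x,(Lᵢ)) := Σ_y ∏ᵢ Lᵢ(x^{(Cᵢ)},y^{(Cᵢ)})`. -/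
noncomputable def cliqueZ {d n : ℕ} {X : Fin d → Type*} [∀ i, Fintype (X i)]
    (C : Fin n → Finset (Fin d))
    (L : ∀ i : Fin n, (∀ j : C i, X j.1) → (∀ j : C i, X j.1) → ℝ) (x : ∀ i, X i) : ℝ :=
  ∑ y : ∀ i, X i, ∏ i, L i (restr (C i) x) (restr (C i) y)

/-- The `(Cᵢ)`-factorizable transition matrix
`M(x,y) := (∏ᵢ Lᵢ(x^{(Cᵢ)},y^{(Cᵢ)})) / Z(x,(Lᵢ))`. -/
noncomputable def cliqueMat {d n : ℕ} {X : Fin d → Type*} [∀ i, Fintype (X i)]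
    (C : Fin n → Finset (Fin d))
    (L : ∀ i : Fin n, (∀ j : C i, X j.1) → (∀ j : C i, X j.1) → ℝ) :
    (∀ i, X i) → (∀ i, X i) → ℝ :=
  fun x y => (∏ i, L i (restr (C i) x) (restr (C i) y)) / cliqueZ C L x

/-!
Where `P(x,y) > 0`, `ln M(x,y) = Σᵢ ln Lᵢ(x^{(Cᵢ)},y^{(Cᵢ)}) - ln Z(x,(Lᵢ))`, and likewise for `𝐏_π`.
Hence `D_KL^π(P ‖ M) - D_KL^π(P ‖ 𝐏_π)` is the `π ⊗ P`-average of
`Σᵢ ln (P_π^{(Cᵢ)} / Lᵢ)` plus `Σ_x π(x) ln (Z(x,(Lᵢ)) / Z(x,(P_π^{(Cᵢ)})))`. Pushing `π ⊗ P` forward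
along `(x, y) ↦ (x^{(Cᵢ)}, y^{(Cᵢ)})` gives `π^{(Cᵢ)} ⊗ P_π^{(Cᵢ)}`, so the first part is
`Σᵢ D_KL^{π^{(Cᵢ)}}(P_π^{(Cᵢ)} ‖ Lᵢ)`, and the second is nonnegative because the normalizing
constants are ordered. If `P` is not absolutely continuous with respect to `M`, the right-hand
side is `+∞`.
-/

namespace EReal

lemma coe_finset_sum {α : Type*} (s : Finset α) (f : α → ℝ) :
    ((∑ a ∈ s, f a : ℝ) : EReal) = ∑ a ∈ s, (f a : EReal) :=
  map_sum (⟨⟨Real.toEReal, coe_zero⟩, coe_add⟩ : ℝ →+ EReal) f s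

lemma finset_sum_ne_bot {α : Type*} {s : Finset α} {f : α → EReal} (h : ∀ a ∈ s, f a ≠ ⊥) :
    ∑ a ∈ s, f a ≠ ⊥ := by
  induction s using Finset.cons_induction with
  | empty => simp
  | cons a s ha ih =>
    rw [sum_cons, add_ne_bot_iff]
    exact ⟨h a (mem_cons_self a s), ih fun b hb => h b (mem_cons_of_mem hb)⟩

lemma finset_sum_eq_top {α : Type*} {s : Finset α} {f : α → EReal} {a : α} (ha : a ∈ s)
    (hfa : f a = ⊤) (h : ∀ b ∈ s, f b ≠ ⊥) : ∑ b ∈ s, f b = ⊤ := by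
  rw [← add_sum_erase s f ha, hfa]
  exact top_add_of_ne_bot (finset_sum_ne_bot fun b hb => h b (mem_of_mem_erase hb))

lemma coe_mul_ne_bot {c : ℝ} (hc : 0 ≤ c) {x : EReal} (hx : x ≠ ⊥) : (c : EReal) * x ≠ ⊥ :=
  (mul_ne_bot _ _).2
    ⟨Or.inl (coe_ne_bot c), Or.inr hx, Or.inl (coe_ne_top c), Or.inl (EReal.coe_nonneg.2 hc)⟩

end EReal

section KL

variable {Y : Type*} [Fintype Y]

/-- The value of `klDiv π M L` when `M` is absolutely continuous with respect to `L`. -/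
noncomputable def klDivReal (π : Y → ℝ) (M L : Y → Y → ℝ) : ℝ :=
  ∑ x, π x * ∑ y, M x y * (Real.log (M x y) - Real.log (L x y))

lemma klTerm_ne_bot (m l : ℝ) : klTerm m l ≠ ⊥ := by
  unfold klTerm; split_ifs
  exacts [EReal.zero_ne_bot, top_ne_bot, EReal.coe_ne_bot _]

lemma klTerm_eq_coe {m l : ℝ} (h : m ≠ 0 → l ≠ 0) :
    klTerm m l = ((m * (Real.log m - Real.log l) : ℝ) : EReal) := by
  by_cases hm : m = 0
  · simp [klTerm, hm]
  · simp [klTerm, hm, h hm, Real.log_div hm (h hm)]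

lemma klDiv_eq_top {π : Y → ℝ} {M L : Y → Y → ℝ} (hπ : ∀ x, 0 ≤ π x) {x y : Y}
    (hx : 0 < π x) (hM : M x y ≠ 0) (hL : L x y = 0) : klDiv π M L = ⊤ := by
  have hrow : ∀ x', ∑ y', klTerm (M x' y') (L x' y') ≠ ⊥ :=
    fun x' => EReal.finset_sum_ne_bot fun y' _ => klTerm_ne_bot _ _
  refine EReal.finset_sum_eq_top (mem_univ x) ?_
    fun x' _ => EReal.coe_mul_ne_bot (hπ x') (hrow x')
  rw [EReal.finset_sum_eq_top (mem_univ y) (by simp [klTerm, hM, hL])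
    fun y' _ => klTerm_ne_bot _ _]
  exact EReal.coe_mul_top_of_pos hx

lemma klDiv_eq_coe_klDivReal (π : Y → ℝ) {M L : Y → Y → ℝ} (h : ∀ x y, M x y ≠ 0 → L x y ≠ 0) :
    klDiv π M L = klDivReal π M L := by
  simp only [klDiv, klDivReal, EReal.coe_finset_sum, EReal.coe_mul,
    klTerm_eq_coe (h _ _)]

end KL

lemma forall_eq_iff_restr_eq {d : ℕ} {X : Fin d → Type*} (S : Finset (Fin d)) (x : ∀ i, X i)
    (xs : ∀ j : S, X j.1) : (∀ j : S, x j.1 = xs j) ↔ restr S x = xs :=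
  funext_iff.symm

section Marginals

variable {d : ℕ} {X : Fin d → Type*} [∀ i, Fintype (X i)]

lemma margS_eq_sum (π : (∀ i, X i) → ℝ) (S : Finset (Fin d)) (xs : ∀ j : S, X j.1) :
    margS π S xs = ∑ x, if restr S x = xs then π x else 0 := by
  simp only [margS, forall_eq_iff_restr_eq]

lemma margS_nonneg {π : (∀ i, X i) → ℝ} (hπ : ∀ x, 0 ≤ π x) (S : Finset (Fin d))
    (xs : ∀ j : S, X j.1) : 0 ≤ margS π S xs := by
  rw [margS_eq_sum]
  exact sum_nonneg fun x _ => by split_ifs; exacts [hπ x, le_rfl]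

/-- Where `margS π S xs = 0`, `keepS` takes the junk value `_ / 0 = 0`, but then the
numerator vanishes as well. -/
lemma margS_mul_keepS {π : (∀ i, X i) → ℝ} (hπ : ∀ x, 0 ≤ π x)
    (P : (∀ i, X i) → (∀ i, X i) → ℝ) (S : Finset (Fin d)) (xs ys : ∀ j : S, X j.1) :
    margS π S xs * keepS π P S xs ys =
      ∑ x, ∑ y, if restr S x = xs ∧ restr S y = ys then π x * P x y else 0 := by
  by_cases h0 : margS π S xs = 0
  · have hfiber : ∀ x, restr S x = xs → π x = 0 := by
      intro x hx
      rw [margS_eq_sum, sum_eq_zero_iff_of_nonneg fun x _ => by split_ifs; exacts [hπ x, le_rfl]]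
        at h0
      simpa [hx] using h0 x (mem_univ x)
    rw [h0, zero_mul]
    refine (sum_eq_zero fun x _ => sum_eq_zero fun y _ => ?_).symm
    split_ifs with hxy
    · rw [hfiber x hxy.1, zero_mul]
    · rfl
  · rw [keepS, mul_div_cancel₀ _ h0]
    simp only [forall_eq_iff_restr_eq]

lemma sum_margS_mul_keepS {π : (∀ i, X i) → ℝ} (hπ : ∀ x, 0 ≤ π x)
    (P : (∀ i, X i) → (∀ i, X i) → ℝ) (S : Finset (Fin d))
    (g : (∀ j : S, X j.1) → (∀ j : S, X j.1) → ℝ) :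
    ∑ xs, ∑ ys, margS π S xs * keepS π P S xs ys * g xs ys =
      ∑ x, ∑ y, π x * P x y * g (restr S x) (restr S y) := by
  calc ∑ xs, ∑ ys, margS π S xs * keepS π P S xs ys * g xs ys
      = ∑ xs, ∑ ys, ∑ x, ∑ y,
          if restr S x = xs ∧ restr S y = ys then π x * P x y * g xs ys else 0 := by
        simp only [margS_mul_keepS hπ, sum_mul, ite_mul, zero_mul]
    _ = ∑ x, ∑ y, ∑ xs, ∑ ys,
          if restr S x = xs ∧ restr S y = ys then π x * P x y * g xs ys else 0 := by
        simp only [Finset.sum_comm (γ := ∀ j : S, X j.1) (α := ∀ i, X i)]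
    _ = ∑ x, ∑ y, π x * P x y * g (restr S x) (restr S y) := by
        simp [ite_and]

lemma keepS_restr_pos {π : (∀ i, X i) → ℝ} {P : (∀ i, X i) → (∀ i, X i) → ℝ}
    (hπ : ∀ x, 0 ≤ π x) (hP : ∀ x y, 0 ≤ P x y) {x y : ∀ i, X i} (hx : 0 < π x)
    (hxy : 0 < P x y) (S : Finset (Fin d)) : 0 < keepS π P S (restr S x) (restr S y) := by
  have hterm : ∀ x' y', 0 ≤ if restr S x' = restr S x ∧ restr S y' = restr S y
      then π x' * P x' y' else 0 := by
    intro x' y'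
    split_ifs
    exacts [mul_nonneg (hπ x') (hP x' y'), le_rfl]
  have hnum := sum_pos' (fun x' _ => sum_nonneg fun y' _ => hterm x' y')
    ⟨x, mem_univ x, sum_pos' (fun y' _ => hterm x y')
      ⟨y, mem_univ y, by rw [if_pos ⟨rfl, rfl⟩]; exact mul_pos hx hxy⟩⟩
  rw [← margS_mul_keepS hπ] at hnum
  exact pos_of_mul_pos_right hnum (margS_nonneg hπ S _)

lemma exists_restr_eq_of_keepS_ne_zero {π : (∀ i, X i) → ℝ} {P : (∀ i, X i) → (∀ i, X i) → ℝ}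
    {S : Finset (Fin d)} {xs ys : ∀ j : S, X j.1} (h : keepS π P S xs ys ≠ 0) :
    ∃ x y, restr S x = xs ∧ restr S y = ys ∧ P x y ≠ 0 := by
  obtain ⟨x, -, hx⟩ := exists_ne_zero_of_sum_ne_zero (div_ne_zero_iff.1 h).1
  obtain ⟨y, -, hxy⟩ := exists_ne_zero_of_sum_ne_zero hx
  split_ifs at hxy with hc
  · exact ⟨x, y, (forall_eq_iff_restr_eq S x xs).1 hc.1, (forall_eq_iff_restr_eq S y ys).1 hc.2,
      right_ne_zero_of_mul hxy⟩
  · exact absurd rfl hxy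

end Marginals

section Clique

variable {d n : ℕ} {X : Fin d → Type*} [∀ i, Fintype (X i)] {C : Fin n → Finset (Fin d)}

lemma ne_zero_of_cliqueMat_ne_zero {L : ∀ i : Fin n, (∀ j : C i, X j.1) → (∀ j : C i, X j.1) → ℝ}
    {x y : ∀ i, X i} (h : cliqueMat C L x y ≠ 0) (i : Fin n) :
    L i (restr (C i) x) (restr (C i) y) ≠ 0 :=
  prod_ne_zero_iff.1 (div_ne_zero_iff.1 h).1 i (mem_univ i)

lemma log_cliqueMat {L : ∀ i : Fin n, (∀ j : C i, X j.1) → (∀ j : C i, X j.1) → ℝ}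
    {x y : ∀ i, X i} (hL : ∀ i, L i (restr (C i) x) (restr (C i) y) ≠ 0)
    (hZ : cliqueZ C L x ≠ 0) :
    Real.log (cliqueMat C L x y) =
      ∑ i, Real.log (L i (restr (C i) x) (restr (C i) y)) - Real.log (cliqueZ C L x) := by
  rw [cliqueMat, Real.log_div (prod_ne_zero_iff.2 fun i _ => hL i) hZ,
    Real.log_prod fun i _ => hL i]

lemma klDivReal_cliqueMat_eq (π : (∀ i, X i) → ℝ) {P : (∀ i, X i) → (∀ i, X i) → ℝ}
    (hP : ∀ x, ∑ y, P x y = 1)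
    {L L' : ∀ i : Fin n, (∀ j : C i, X j.1) → (∀ j : C i, X j.1) → ℝ}
    (hL : ∀ x y, P x y ≠ 0 → ∀ i, L i (restr (C i) x) (restr (C i) y) ≠ 0)
    (hL' : ∀ x y, P x y ≠ 0 → ∀ i, L' i (restr (C i) x) (restr (C i) y) ≠ 0)
    (hZ : ∀ x, cliqueZ C L x ≠ 0) (hZ' : ∀ x, cliqueZ C L' x ≠ 0) :
    klDivReal π P (cliqueMat C L) =
      klDivReal π P (cliqueMat C L') +
        ∑ x, π x * ∑ y, P x y * ∑ i, (Real.log (L' i (restr (C i) x) (restr (C i) y)) -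
          Real.log (L i (restr (C i) x) (restr (C i) y))) +
        ∑ x, π x * (Real.log (cliqueZ C L x) - Real.log (cliqueZ C L' x)) := by
  have hpoint : ∀ x y, P x y * (Real.log (P x y) - Real.log (cliqueMat C L x y)) =
      P x y * (Real.log (P x y) - Real.log (cliqueMat C L' x y)) +
        P x y * ∑ i, (Real.log (L' i (restr (C i) x) (restr (C i) y)) -
          Real.log (L i (restr (C i) x) (restr (C i) y))) +
        P x y * (Real.log (cliqueZ C L x) - Real.log (cliqueZ C L' x)) := by
    intro x y
    by_cases hxy : P x y = 0
    · simp [hxy]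
    · rw [log_cliqueMat (hL x y hxy) (hZ x), log_cliqueMat (hL' x y hxy) (hZ' x),
        sum_sub_distrib]
      ring
  simp only [klDivReal, hpoint, sum_add_distrib, ← sum_mul, hP, one_mul, mul_add]

lemma sum_klDivReal_keepS_eq {π : (∀ i, X i) → ℝ} (hπ : ∀ x, 0 ≤ π x)
    (P : (∀ i, X i) → (∀ i, X i) → ℝ)
    (L : ∀ i : Fin n, (∀ j : C i, X j.1) → (∀ j : C i, X j.1) → ℝ) :
    ∑ i, klDivReal (margS π (C i)) (keepS π P (C i)) (L i) =
      ∑ x, π x * ∑ y, P x y * ∑ i,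
        (Real.log (keepS π P (C i) (restr (C i) x) (restr (C i) y)) -
          Real.log (L i (restr (C i) x) (restr (C i) y))) := by
  simp only [klDivReal, mul_sum, ← mul_assoc, sum_margS_mul_keepS hπ]
  simp only [Finset.sum_comm (γ := Fin n) (α := ∀ i, X i)]

end Clique

theorem stmt16_general {d n : ℕ} {X : Fin d → Type*} [∀ i, Fintype (X i)]
    (C : Fin n → Finset (Fin d))
    (π : (∀ i, X i) → ℝ) (hpos : ∀ x, 0 < π x)
    (P : (∀ i, X i) → (∀ i, X i) → ℝ) (hP : IsTransMat P)
    (L : ∀ i : Fin n, (∀ j : C i, X j.1) → (∀ j : C i, X j.1) → ℝ)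
    (hZP : ∀ x, 0 < cliqueZ C (fun i => keepS π P (C i)) x)
    (hZZ : ∀ x, cliqueZ C (fun i => keepS π P (C i)) x ≤ cliqueZ C L x) :
    klDiv π P (cliqueMat C fun i => keepS π P (C i)) +
        ∑ i, klDiv (margS π (C i)) (keepS π P (C i)) (L i) ≤
      klDiv π P (cliqueMat C L) := by
  have hπ x : 0 ≤ π x := (hpos x).le
  by_cases hPL : ∃ x y, P x y ≠ 0 ∧ cliqueMat C L x y = 0
  · obtain ⟨x, y, hxy, hM⟩ := hPL
    rw [klDiv_eq_top hπ (hpos x) hxy hM]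
    exact le_top
  push Not at hPL
  have hLfac x y (hxy : P x y ≠ 0) := ne_zero_of_cliqueMat_ne_zero (hPL x y hxy)
  have hQfac x y (hxy : P x y ≠ 0) i : keepS π P (C i) (restr (C i) x) (restr (C i) y) ≠ 0 :=
    (keepS_restr_pos hπ hP.1 (hpos x) ((hP.1 x y).lt_of_ne' hxy) (C i)).ne'
  have hQL i xs ys (h : keepS π P (C i) xs ys ≠ 0) : L i xs ys ≠ 0 := by
    obtain ⟨x, y, rfl, rfl, hxy⟩ := exists_restr_eq_of_keepS_ne_zero h
    exact hLfac x y hxy i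
  have hPQ x y (hxy : P x y ≠ 0) : cliqueMat C (fun i => keepS π P (C i)) x y ≠ 0 :=
    div_ne_zero (prod_ne_zero_iff.2 fun i _ => hQfac x y hxy i) (hZP x).ne'
  have hZ : 0 ≤ ∑ x, π x * (Real.log (cliqueZ C L x) -
      Real.log (cliqueZ C (fun i => keepS π P (C i)) x)) :=
    sum_nonneg fun x _ => mul_nonneg (hπ x) (sub_nonneg.2 (Real.log_le_log (hZP x) (hZZ x)))
  simp only [klDiv_eq_coe_klDivReal _ hPL, klDiv_eq_coe_klDivReal _ hPQ,
    klDiv_eq_coe_klDivReal _ (hQL _)]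
  rw [← EReal.coe_finset_sum, ← EReal.coe_add, EReal.coe_le_coe_iff,
    klDivReal_cliqueMat_eq π hP.2 hLfac hQfac (fun x => ((hZP x).trans_le (hZZ x)).ne')
      (fun x => (hZP x).ne'), sum_klDivReal_keepS_eq hπ]
  linarith

/-- Pythagorean inequality for clique factorizations: if the normalization constants of
`(Lᵢ)` dominate those of the keep-`Cᵢ`-in matrices, then
`D_KL^π(P ‖ M) ≥ D_KL^π(P ‖ 𝐏_π) + Σᵢ D_KL^{π^{(Cᵢ)}}(P_π^{(Cᵢ)} ‖ Lᵢ)`. -/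
theorem stmt16 {d n : ℕ} {X : Fin d → Type*} [∀ i, Fintype (X i)]
    (C : Fin n → Finset (Fin d)) (hcov : ∀ j : Fin d, ∃ i, j ∈ C i)
    (π : (∀ i, X i) → ℝ) (hπ : IsProbMass π) (hpos : ∀ x, 0 < π x)
    (P : (∀ i, X i) → (∀ i, X i) → ℝ) (hP : IsTransMat P)
    (L : ∀ i : Fin n, (∀ j : C i, X j.1) → (∀ j : C i, X j.1) → ℝ)
    (hL : ∀ i, IsTransMat (L i))
    (hZL : ∀ x, 0 < cliqueZ C L x)
    (hZP : ∀ x, 0 < cliqueZ C (fun i => keepS π P (C i)) x)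
    (hZZ : ∀ x, cliqueZ C (fun i => keepS π P (C i)) x ≤ cliqueZ C L x) :
    klDiv π P (cliqueMat C fun i => keepS π P (C i)) +
        ∑ i, klDiv (margS π (C i)) (keepS π P (C i)) (L i) ≤
      klDiv π P (cliqueMat C L) :=
  stmt16_general C π hpos P hP L hZP hZZ
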